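/- arXiv:1811.06603 — 11 statements merged into one kernel-verified Lean document; each statement's English description precedes it below -/
import Mathlib

section
/- Let f be a submodular set function on a finite ground set N and let F be its multilinear extension. Then for every two vectors x, y in [0,1]^N with x ≤ y coordinatewise and every element u of N, it holds that F(x with its u-coordinate set to 1) − F(x with its u-coordinate set to 0) ≥ F(y with its u-coordinate set to 1) − F(y with its u-coordinate set to 0). (Equivalently, the gradient of F is antitone: ∇F(x) ≥ ∇F(y) coordinatewise whenever x ≤ y.) -/
/-!
The multilinear extension `F` of `f` is affine in each coordinate `v`, and its slope in `v` is
the multilinear extension of the marginal gain `S ↦ f (S ∪ {v}) - f (S \ {v})`. Hence the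
difference `F (x[u ↦ 1]) - F (x[u ↦ 0])` is the extension of the marginal gain of `f` at `u`,
which submodularity makes antitone. Finally, the extension of a monotone set function is monotone
on the unit cube: its slopes are extensions of nonnegative functions, so `F` grows as one moves
from `x` to `y ≥ x` one coordinate at a time.
-/

open Finset

/-- The multilinear extension of a set function `f` on a finite ground set `N`. -/
noncomputable def multilinearExt {N : Type*} [Fintype N] [DecidableEq N]
    (f : Finset N → ℝ) (x : N → ℝ) : ℝ :=
  ∑ S : Finset N, f S * ((∏ u ∈ S, x u) * ∏ u ∈ Sᶜ, (1 - x u))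

open Function

theorem monotoneOn_Icc_of_le_update {ι α β : Type*} [Fintype ι] [DecidableEq ι] [Preorder α]
    [Preorder β] {φ : (ι → α) → β} {l h : ι → α}
    (hφ : ∀ z ∈ Set.Icc l h, ∀ v t, z v ≤ t → t ≤ h v → φ z ≤ φ (update z v t)) :
    MonotoneOn φ (Set.Icc l h) := by
  intro z hz z' hz' hzz'
  have hpiece : ∀ A : Finset ι, A.piecewise z' z ∈ Set.Icc l h := fun A =>
    ⟨fun u => by by_cases hu : u ∈ A <;> simp [hu, hz.1 u, hz'.1 u],
     fun u => by by_cases hu : u ∈ A <;> simp [hu, hz.2 u, hz'.2 u]⟩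
  suffices ∀ A : Finset ι, φ z ≤ φ (A.piecewise z' z) by simpa using this univ
  intro A
  induction A using Finset.induction_on with
  | empty => simp
  | insert a A ha ih =>
    rw [piecewise_insert]
    refine ih.trans (hφ _ (hpiece A) a _ ?_ (hz'.2 a))
    simpa [ha] using hzz' a

section MarginalGain

variable {N : Type*} [DecidableEq N]

/-- Insensitive to whether `v ∈ S`, so that its multilinear extension does not depend on the
`v`-th coordinate. -/
def marginalGain (f : Finset N → ℝ) (v : N) (S : Finset N) : ℝ :=
  f (insert v S) - f (S.erase v)

theorem marginalGain_insert (f : Finset N → ℝ) (v : N) (S : Finset N) :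
    marginalGain f v (insert v S) = marginalGain f v S := by
  simp [marginalGain, erase_insert_eq_erase]

theorem marginalGain_nonneg {f : Finset N → ℝ} (hf : Monotone f) (v : N) :
    0 ≤ marginalGain f v :=
  fun S => sub_nonneg.2 <| hf <| (erase_subset v S).trans (subset_insert v S)

theorem antitone_marginalGain {f : Finset N → ℝ}
    (hf : ∀ S T : Finset N, S ⊆ T → ∀ e ∉ T, f (insert e T) - f T ≤ f (insert e S) - f S)
    (v : N) : Antitone (marginalGain f v) := fun S T hST => by
  have hins : ∀ S : Finset N, insert v (S.erase v) = insert v S := fun S => by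
    rw [insert_eq, insert_eq, erase_eq, union_sdiff_self_eq_union]
  simpa [marginalGain, hins] using hf _ _ (erase_subset_erase v hST) v (notMem_erase v T)

end MarginalGain

section MultilinearExt

variable {N : Type*} [Fintype N] [DecidableEq N]

theorem multilinearExt_update (f : Finset N → ℝ) (z : N → ℝ) (v : N) (t : ℝ) :
    multilinearExt f (update z v t) =
      ∑ S ∈ (univ.erase v).powerset, ((1 - t) * f S + t * f (insert v S)) *
        ((∏ u ∈ S, z u) * ∏ u ∈ (insert v S)ᶜ, (1 - z u)) := by
  have huniv : (univ : Finset N) = insert v (univ.erase v) := (insert_erase (mem_univ v)).symm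
  rw [multilinearExt, ← powerset_univ]
  conv_lhs => rw [huniv]
  rw [sum_powerset_insert (notMem_erase v univ), ← sum_add_distrib]
  refine sum_congr rfl fun S hS => ?_
  have hvS : v ∉ S := fun h => notMem_erase v univ (mem_powerset.1 hS h)
  have hcompl : ∀ u, 1 - update z v t u = update (fun u => 1 - z u) v (1 - t) u :=
    apply_update (fun _ r => 1 - r) z v t
  simp only [hcompl, prod_update_of_notMem hvS, prod_update_of_mem (mem_compl.2 hvS),
    prod_update_of_mem (mem_insert_self v S), sdiff_singleton_eq_erase, erase_insert hvS,
    compl_insert, prod_update_of_notMem (notMem_erase v _)]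
  ring

theorem multilinearExt_update_eq_add_mul (f : Finset N → ℝ) (z : N → ℝ) (v : N) (t : ℝ) :
    multilinearExt f (update z v t) =
      multilinearExt f (update z v 0) + t * multilinearExt (marginalGain f v) z := by
  have hmarg := multilinearExt_update (marginalGain f v) z v (z v)
  rw [update_eq_self] at hmarg
  simp only [hmarg, multilinearExt_update, marginalGain_insert, mul_sum, ← sum_add_distrib]
  refine sum_congr rfl fun S hS => ?_
  have hvS : v ∉ S := fun h => notMem_erase v univ (mem_powerset.1 hS h)
  rw [marginalGain, erase_eq_of_notMem hvS]
  ring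

theorem multilinearExt_update_one_sub_update_zero (f : Finset N → ℝ) (z : N → ℝ) (v : N) :
    multilinearExt f (update z v 1) - multilinearExt f (update z v 0) =
      multilinearExt (marginalGain f v) z := by
  rw [multilinearExt_update_eq_add_mul f z v 1]
  ring

theorem multilinearExt_nonneg {f : Finset N → ℝ} (hf : 0 ≤ f) {z : N → ℝ}
    (hz : z ∈ Set.Icc (0 : N → ℝ) 1) : 0 ≤ multilinearExt f z :=
  sum_nonneg fun S _ => mul_nonneg (hf S) <| mul_nonneg
    (prod_nonneg fun u _ => hz.1 u) (prod_nonneg fun u _ => sub_nonneg.2 (hz.2 u))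

theorem multilinearExt_neg (f : Finset N → ℝ) (z : N → ℝ) :
    multilinearExt (-f) z = -multilinearExt f z := by
  simp [multilinearExt, sum_neg_distrib]

theorem multilinearExt_monotoneOn {f : Finset N → ℝ} (hf : Monotone f) :
    MonotoneOn (multilinearExt f) (Set.Icc 0 1) :=
  monotoneOn_Icc_of_le_update fun z hz v t hzt _ => by
    rw [multilinearExt_update_eq_add_mul f z v t]
    conv_lhs => rw [← update_eq_self v z, multilinearExt_update_eq_add_mul f z v (z v)]
    gcongr
    exact multilinearExt_nonneg (marginalGain_nonneg hf v) hz

theorem multilinearExt_antitoneOn {f : Finset N → ℝ} (hf : Antitone f) :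
    AntitoneOn (multilinearExt f) (Set.Icc 0 1) := fun x hx y hy hxy => by
  simpa [multilinearExt_neg] using multilinearExt_monotoneOn (f := -f) hf.neg hx hy hxy

end MultilinearExt

theorem stmt_0 {N : Type*} [Fintype N] [DecidableEq N] (f : Finset N → ℝ)
    (hsub : ∀ S T : Finset N, S ⊆ T → ∀ e ∉ T,
      f (insert e T) - f T ≤ f (insert e S) - f S)
    (x y : N → ℝ) (hx : x ∈ Set.Icc (0 : N → ℝ) 1) (hy : y ∈ Set.Icc (0 : N → ℝ) 1)
    (hxy : x ≤ y) (u : N) :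
    multilinearExt f (Function.update y u 1) - multilinearExt f (Function.update y u 0) ≤
      multilinearExt f (Function.update x u 1) - multilinearExt f (Function.update x u 0) := by
  simp only [multilinearExt_update_one_sub_update_zero]
  exact multilinearExt_antitoneOn (antitone_marginalGain hsub u) hx hy hxy
end

section
/- Let a and b be real numbers with a + b ≥ 0, and define r := a/(a+b) if a > 0 and b > 0, r := 1 if a > 0 and b ≤ 0, and r := 0 if a ≤ 0. Then a·r + b·(1 − r) ≥ max(a, b)/2 ≥ 0. -/
/-! With `r = a / (a + b)` the payoff `a r + b (1 - r)` equals `(a² + b²) / (a + b)`, which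
dominates `max a b ^ 2 / (a + b) ≥ max a b / 2` because `a + b ≤ 2 max a b`. In the other two
cases `r` selects the larger of `a` and `b` outright. -/

lemma mul_div_add_add_mul_one_sub_div {a b : ℝ} (hab : a + b ≠ 0) :
    a * (a / (a + b)) + b * (1 - a / (a + b)) = (a ^ 2 + b ^ 2) / (a + b) := by
  field_simp
  ring

lemma max_div_two_le_sq_add_sq_div_add {a b : ℝ} (hab : 0 < a + b) :
    max a b / 2 ≤ (a ^ 2 + b ^ 2) / (a + b) := by
  rw [div_le_div_iff₀ two_pos hab]
  rcases le_total a b with h | h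
  · rw [max_eq_right h]; nlinarith
  · rw [max_eq_left h]; nlinarith

lemma max_nonneg_of_add_nonneg {a b : ℝ} (hab : 0 ≤ a + b) : 0 ≤ max a b := by
  rcases le_total a b with h | h
  · rw [max_eq_right h]; linarith
  · rw [max_eq_left h]; linarith

theorem stmt_3 (a b : ℝ) (hab : 0 ≤ a + b) :
    let r : ℝ := if 0 < a ∧ 0 < b then a / (a + b) else if 0 < a then 1 else 0
    a * r + b * (1 - r) ≥ max a b / 2 ∧ max a b / 2 ≥ 0 := by
  intro r
  have hmax := max_nonneg_of_add_nonneg hab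
  refine ⟨?_, by linarith⟩
  by_cases hpos : 0 < a ∧ 0 < b
  · have hsum : 0 < a + b := add_pos hpos.1 hpos.2
    simp only [r, if_pos hpos, ge_iff_le, mul_div_add_add_mul_one_sub_div hsum.ne']
    exact max_div_two_le_sq_add_sq_div_add hsum
  by_cases ha : 0 < a
  · have hb : b ≤ a := by linarith [not_and.mp hpos ha]
    simp only [r, if_neg hpos, if_pos ha, max_eq_left hb]
    linarith
  · have ha' : a ≤ b := by linarith
    simp only [r, if_neg hpos, if_neg ha, max_eq_right ha']
    linarith
end

section
/- Let f be a non-negative submodular set function on a finite ground set N and let F be its multilinear extension. Then F((1/2)·1_N) ≥ (1/4)·f(S) for every set S ⊆ N, and F((1/2)·1_N) ≤ max_{T ⊆ N} f(T), where (1/2)·1_N is the vector with all coordinates equal to 1/2. -/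
/-!
At `x = ½·1_N` every set has weight `2^{-n}`, so `F(½·1_N)` is the average of `f`; the upper
bound is then immediate. For the lower bound, submodularity and non-negativity give
`f(S ∪ T) ≤ f T + f(S ∆ T)` and `f S ≤ f(S ∪ T) + f(S ∪ Tᶜ)`. Since `T ↦ S ∆ T` and `T ↦ Tᶜ`
are permutations of `2^N`, summing over `T` yields
`2^n f S ≤ 2 ∑_T f(S ∪ T) ≤ 4 ∑_T f T`.
-/

open Finset

def IsSubmodular {N : Type*} [DecidableEq N] (f : Finset N → ℝ) : Prop :=
  ∀ S T : Finset N, S ⊆ T → ∀ e ∉ T, f (insert e T) - f T ≤ f (insert e S) - f S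

theorem Finset.sum_le_two_nsmul_sum_of_le_add_perm {α M : Type*} [Fintype α] [AddCommMonoid M]
    [PartialOrder M] [IsOrderedAddMonoid M] (σ : Equiv.Perm α) {g h : α → M}
    (hgh : ∀ x, g x ≤ h x + h (σ x)) : ∑ x, g x ≤ 2 • ∑ x, h x :=
  calc ∑ x, g x ≤ ∑ x, (h x + h (σ x)) := sum_le_sum fun x _ => hgh x
    _ = 2 • ∑ x, h x := by rw [sum_add_distrib, Equiv.sum_comp, two_nsmul]

namespace IsSubmodular

variable {N : Type*} [DecidableEq N] {f : Finset N → ℝ}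

theorem sub_le_sub_of_subset (hf : IsSubmodular f) {C D : Finset N} (hCD : C ⊆ D)
    {E : Finset N} (hDE : Disjoint D E) : f (D ∪ E) - f D ≤ f (C ∪ E) - f C := by
  induction E using Finset.induction_on with
  | empty => simp
  | insert e E he ih =>
    rw [disjoint_insert_right] at hDE
    have step := hf (C ∪ E) (D ∪ E) (union_subset_union hCD subset_rfl) e
      (by simp [hDE.1, he])
    rw [union_insert, union_insert]
    linarith [ih hDE.2]

theorem union_add_inter_le (hf : IsSubmodular f) (X Y : Finset N) :
    f (X ∪ Y) + f (X ∩ Y) ≤ f X + f Y := by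
  have h := hf.sub_le_sub_of_subset (inter_subset_left : X ∩ Y ⊆ X)
    (disjoint_sdiff : Disjoint X (Y \ X))
  have hY : X ∩ Y ∪ Y \ X = Y := by rw [inter_comm, union_comm, sdiff_union_inter]
  rw [union_sdiff_self_eq_union, hY] at h
  linarith

variable [Fintype N]

theorem sum_union_le_two_mul_sum (hf : IsSubmodular f) (hnn : ∀ S, 0 ≤ f S) (S : Finset N) :
    ∑ T, f (S ∪ T) ≤ 2 * ∑ T, f T := by
  rw [two_mul, ← two_nsmul]
  refine sum_le_two_nsmul_sum_of_le_add_perm (symmDiff_right_involutive S).toPerm fun T => ?_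
  change f (S ∪ T) ≤ f T + f (symmDiff S T)
  have hunion : T ∪ symmDiff S T = S ∪ T := by ext; simp [mem_symmDiff]; tauto
  have hinter : T ∩ symmDiff S T = T \ S := by ext; simp [mem_symmDiff]; tauto
  have := hf.union_add_inter_le T (symmDiff S T)
  rw [hunion, hinter] at this
  linarith [hnn (T \ S)]

theorem pow_card_mul_le_two_mul_sum_union (hf : IsSubmodular f) (hnn : ∀ S, 0 ≤ f S)
    (S : Finset N) : 2 ^ Fintype.card N * f S ≤ 2 * ∑ T, f (S ∪ T) := by
  have hconst : 2 ^ Fintype.card N * f S = ∑ _T : Finset N, f S := by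
    rw [sum_const, card_univ, Fintype.card_finset, nsmul_eq_mul, Nat.cast_pow, Nat.cast_ofNat]
  rw [hconst, two_mul, ← two_nsmul]
  refine sum_le_two_nsmul_sum_of_le_add_perm compl_involutive.toPerm fun T => ?_
  change f S ≤ f (S ∪ T) + f (S ∪ Tᶜ)
  have hunion : S ∪ T ∪ (S ∪ Tᶜ) = univ := by ext; simp; tauto
  have hinter : (S ∪ T) ∩ (S ∪ Tᶜ) = S := by ext; simp; tauto
  have := hf.union_add_inter_le (S ∪ T) (S ∪ Tᶜ)
  rw [hunion, hinter] at this
  linarith [hnn univ]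

end IsSubmodular

theorem multilinearExt_half {N : Type*} [Fintype N] [DecidableEq N] (f : Finset N → ℝ) :
    multilinearExt f (fun _ => 1 / 2) = (∑ T, f T) / 2 ^ Fintype.card N := by
  rw [multilinearExt, sum_div]
  refine sum_congr rfl fun T _ => ?_
  rw [prod_const, prod_const, show (1 : ℝ) - 1 / 2 = 1 / 2 by norm_num, ← pow_add,
    card_add_card_compl, div_pow, one_pow, mul_one_div]

theorem stmt_5 {N : Type*} [Fintype N] [DecidableEq N] (f : Finset N → ℝ)
    (hnn : ∀ S : Finset N, 0 ≤ f S)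
    (hsub : ∀ S T : Finset N, S ⊆ T → ∀ e ∉ T,
      f (insert e T) - f T ≤ f (insert e S) - f S) :
    (∀ S : Finset N, (1 / 4 : ℝ) * f S ≤ multilinearExt f (fun _ => (1 / 2 : ℝ))) ∧
      multilinearExt f (fun _ => (1 / 2 : ℝ)) ≤
        (Finset.univ : Finset (Finset N)).sup' Finset.univ_nonempty f := by
  have hf : IsSubmodular f := hsub
  have hpow : (0 : ℝ) < 2 ^ Fintype.card N := by positivity
  rw [multilinearExt_half]
  refine ⟨fun S => ?_, ?_⟩
  · rw [le_div_iff₀ hpow]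
    linarith [hf.sum_union_le_two_mul_sum hnn S, hf.pow_card_mul_le_two_mul_sum_union hnn S]
  · rw [div_le_iff₀ hpow]
    have hbound := sum_le_card_nsmul univ f (univ.sup' univ_nonempty f)
      fun T _ => le_sup' f (mem_univ T)
    rwa [card_univ, Fintype.card_finset, nsmul_eq_mul, Nat.cast_pow, Nat.cast_ofNat,
      mul_comm] at hbound
end

section
/- Let N be a finite set and let F: ℝ^N → ℝ be differentiable on the box [0,1]^N, non-negative on [0,1]^N, and have an antitone gradient on the box (i.e., ∇F(x) ≥ ∇F(y) coordinatewise whenever x ≤ y coordinatewise, x, y ∈ [0,1]^N). Let ε > 0, τ ≥ 0, and let δ ∈ [ε, 1/2]. If for every t ∈ [0, δ − ε) it holds that Σ_{u∈N} [∂_u F(t·1_N) − ∂_u F((1−t)·1_N)] ≥ 16τ, then F(δ·1_N) + F((1−δ)·1_N) ≥ 16τ·(δ − ε). -/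
/-!
Restrict `F` to the symmetric pair of diagonal points: `g t = F (t • 1) + F ((1 - t) • 1)`.
By the chain rule `g' t = ∑ u, (∂_u F (t • 1) - ∂_u F ((1 - t) • 1))`. On `[0, δ - ε)` this is
at least `16 τ` by hypothesis, and on `[0, 1/2]` it is nonnegative because `t • 1 ≤ (1 - t) • 1`
and the gradient is antitone. Hence `g δ ≥ g (δ - ε) ≥ g 0 + 16 τ (δ - ε)`, and `g 0 ≥ 0`
since `F ≥ 0`.
-/

open Finset

open Set in
theorem mul_sub_le_sub_of_le_hasDerivWithinAt_Icc {f f' : ℝ → ℝ} {a b C : ℝ} (hab : a ≤ b)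
    (hf : ∀ x ∈ Icc a b, HasDerivWithinAt f (f' x) (Icc a b) x)
    (hC : ∀ x ∈ Ioo a b, C ≤ f' x) :
    C * (b - a) ≤ f b - f a := by
  have hderiv : ∀ x ∈ interior (Icc a b), HasDerivAt f (f' x) x := fun x hx =>
    (hf x (interior_subset hx)).hasDerivAt (mem_interior_iff_mem_nhds.1 hx)
  rw [interior_Icc] at hderiv
  refine (convex_Icc a b).mul_sub_le_image_sub_of_le_deriv
    (fun x hx => (hf x hx).continuousWithinAt) ?_ ?_
    a (left_mem_Icc.2 hab) b (right_mem_Icc.2 hab) hab <;> rw [interior_Icc]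
  · exact fun x hx => (hderiv x hx).differentiableAt.differentiableWithinAt
  · exact fun x hx => (hderiv x hx).deriv ▸ hC x hx

theorem ContinuousLinearMap.apply_one_eq_sum_single {R M N : Type*} [Semiring R]
    [TopologicalSpace R] [AddCommMonoid M] [Module R M] [TopologicalSpace M]
    [Fintype N] [DecidableEq N] (L : (N → R) →L[R] M) :
    L 1 = ∑ u, L (Pi.single u 1) := by
  rw [← map_sum, ← Finset.univ_sum_single (1 : N → R)]
  rfl

theorem HasFDerivWithinAt.hasDerivWithinAt_diag {N : Type*} [Fintype N]
    {F : (N → ℝ) → ℝ} {L : (N → ℝ) →L[ℝ] ℝ} {S : Set (N → ℝ)} {s : Set ℝ} {t : ℝ}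
    (hF : HasFDerivWithinAt F L S (fun _ => t)) (hs : Set.MapsTo (fun r _ => r) s S) :
    HasDerivWithinAt (fun r => F (fun _ => r)) (L 1) s t :=
  hF.comp_hasDerivWithinAt t (hasDerivWithinAt_pi.2 fun _ => hasDerivWithinAt_id t s) hs

theorem const_mem_Icc_zero_one {N : Type*} {r : ℝ} (hr : r ∈ Set.Icc (0 : ℝ) 1) :
    (fun _ : N => r) ∈ Set.Icc (0 : N → ℝ) 1 :=
  ⟨fun _ => hr.1, fun _ => hr.2⟩

theorem hasDerivWithinAt_diag_add_reflect {N : Type*} [Fintype N] [DecidableEq N]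
    {F : (N → ℝ) → ℝ} {F' : (N → ℝ) → ((N → ℝ) →L[ℝ] ℝ)}
    (hF : ∀ x ∈ Set.Icc (0 : N → ℝ) 1, HasFDerivWithinAt F (F' x) (Set.Icc 0 1) x)
    {s : Set ℝ} (hs : s ⊆ Set.Icc 0 1) {t : ℝ} (ht : t ∈ s) :
    HasDerivWithinAt (fun r => F (fun _ => r) + F (fun _ => 1 - r))
      (∑ u, (F' (fun _ => t) (Pi.single u 1) - F' (fun _ => 1 - t) (Pi.single u 1))) s t := by
  have hreflect : Set.MapsTo (fun r : ℝ => 1 - r) s (Set.Icc 0 1) := fun r hr =>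
    ⟨sub_nonneg.2 (hs hr).2, sub_le_self 1 (hs hr).1⟩
  have hdiag : HasDerivWithinAt (fun r => F (fun _ => r)) (F' (fun _ => t) 1) s t :=
    (hF _ (const_mem_Icc_zero_one (hs ht))).hasDerivWithinAt_diag
      fun _ hr => const_mem_Icc_zero_one (hs hr)
  have hreflected :
      HasDerivWithinAt (fun r => F (fun _ => 1 - r)) (F' (fun _ => 1 - t) 1 * -1) s t :=
    ((hF _ (const_mem_Icc_zero_one (hreflect ht))).hasDerivWithinAt_diag
      fun _ hr => const_mem_Icc_zero_one hr).comp t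
      ((hasDerivWithinAt_id t s).const_sub 1) hreflect
  refine (hdiag.add hreflected).congr_deriv ?_
  rw [mul_neg_one, ← sub_eq_add_neg, sum_sub_distrib,
    ContinuousLinearMap.apply_one_eq_sum_single, ContinuousLinearMap.apply_one_eq_sum_single]

theorem stmt_7_general {N : Type*} [Fintype N] [DecidableEq N]
    (F : (N → ℝ) → ℝ) (F' : (N → ℝ) → ((N → ℝ) →L[ℝ] ℝ))
    (hdiff : ∀ x ∈ Set.Icc (0 : N → ℝ) 1, HasFDerivWithinAt F (F' x) (Set.Icc 0 1) x)
    (hnn : ∀ x ∈ Set.Icc (0 : N → ℝ) 1, 0 ≤ F x)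
    (hanti : ∀ x ∈ Set.Icc (0 : N → ℝ) 1, ∀ y ∈ Set.Icc (0 : N → ℝ) 1, x ≤ y →
      ∀ u : N, F' y (Pi.single u 1) ≤ F' x (Pi.single u 1))
    (ε τ δ : ℝ) (hε : 0 < ε) (hδ : δ ∈ Set.Icc ε (1 / 2))
    (h : ∀ t ∈ Set.Ico (0 : ℝ) (δ - ε),
      16 * τ ≤
        ∑ u : N, (F' (fun _ => t) (Pi.single u 1) - F' (fun _ => 1 - t) (Pi.single u 1))) :
    16 * τ * (δ - ε) ≤ F (fun _ => δ) + F (fun _ => 1 - δ) := by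
  obtain ⟨hεδ, hδ_half⟩ := hδ
  set g : ℝ → ℝ := fun r => F (fun _ => r) + F (fun _ => 1 - r)
  have hrise : 16 * τ * (δ - ε - 0) ≤ g (δ - ε) - g 0 :=
    mul_sub_le_sub_of_le_hasDerivWithinAt_Icc (by linarith)
      (fun _ => hasDerivWithinAt_diag_add_reflect hdiff (Set.Icc_subset_Icc le_rfl (by linarith)))
      fun t ht => h t ⟨ht.1.le, ht.2⟩
  have hslope_nonneg : ∀ t ∈ Set.Icc (0 : ℝ) (1 / 2),
      0 ≤ ∑ u, (F' (fun _ => t) (Pi.single u 1) - F' (fun _ => 1 - t) (Pi.single u 1)) :=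
    fun t ht => sum_nonneg fun u _ => sub_nonneg.2 <|
      hanti _ (const_mem_Icc_zero_one ⟨ht.1, by linarith [ht.2]⟩)
        _ (const_mem_Icc_zero_one ⟨by linarith [ht.2], by linarith [ht.1]⟩)
        (fun _ => by linarith [ht.2]) u
  have hmono : 0 * (δ - (δ - ε)) ≤ g δ - g (δ - ε) :=
    mul_sub_le_sub_of_le_hasDerivWithinAt_Icc (by linarith)
      (fun _ => hasDerivWithinAt_diag_add_reflect hdiff
        (Set.Icc_subset_Icc (by linarith) (by linarith)))
      fun t ht => hslope_nonneg t ⟨by linarith [ht.1], by linarith [ht.2]⟩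
  have hg0 : 0 ≤ g 0 :=
    add_nonneg (hnn _ (const_mem_Icc_zero_one ⟨le_rfl, zero_le_one⟩))
      (hnn _ (const_mem_Icc_zero_one ⟨by norm_num, by norm_num⟩))
  linarith

theorem stmt_7 {N : Type*} [Fintype N] [DecidableEq N]
    (F : (N → ℝ) → ℝ) (F' : (N → ℝ) → ((N → ℝ) →L[ℝ] ℝ))
    (hdiff : ∀ x ∈ Set.Icc (0 : N → ℝ) 1, HasFDerivWithinAt F (F' x) (Set.Icc 0 1) x)
    (hnn : ∀ x ∈ Set.Icc (0 : N → ℝ) 1, 0 ≤ F x)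
    (hanti : ∀ x ∈ Set.Icc (0 : N → ℝ) 1, ∀ y ∈ Set.Icc (0 : N → ℝ) 1, x ≤ y →
      ∀ u : N, F' y (Pi.single u 1) ≤ F' x (Pi.single u 1))
    (ε τ δ : ℝ) (hε : 0 < ε) (hτ : 0 ≤ τ) (hδ : δ ∈ Set.Icc ε (1 / 2))
    (h : ∀ t ∈ Set.Ico (0 : ℝ) (δ - ε),
      16 * τ ≤
        ∑ u : N, (F' (fun _ => t) (Pi.single u 1) - F' (fun _ => 1 - t) (Pi.single u 1))) :
    16 * τ * (δ - ε) ≤ F (fun _ => δ) + F (fun _ => 1 - δ) :=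
  stmt_7_general F F' hdiff hnn hanti ε τ δ hε hδ h
end

section
/- Let N be a finite set and let F: ℝ^N → ℝ be differentiable on the box [0,1]^N, non-negative on [0,1]^N, and have an antitone gradient on the box (i.e., ∇F(x) ≥ ∇F(y) coordinatewise whenever x ≤ y coordinatewise, x, y ∈ [0,1]^N). Then for every vector z ∈ [0,1]^N and every scalar δ ∈ [0,1], both F(z ∨ (δ·1_N)) ≥ (1−δ)·F(z) and F(z ∧ ((1−δ)·1_N)) ≥ (1−δ)·F(z) hold. -/
/-!
Along a segment `t ↦ x + t (y - x)` with `x ≤ y`, the derivative of `F` is `∇F · (y - x)` with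
`y - x ≥ 0`, so the antitone gradient makes `F` concave on every monotone segment of the box.
For `a = z ∨ δ·1`, extend the segment from `z` through `a` to the point `w` with
`a = (1 - δ) z + δ w`; `w` still lies in the box, so concavity and `F w ≥ 0` give
`F a ≥ (1 - δ) F z + δ F w ≥ (1 - δ) F z`. The case `z ∧ (1 - δ)·1` is the same with `w ≤ z`.
-/

open Set

lemma exists_max_eq_convex_combination {a δ : ℝ} (ha : a ∈ Icc (0 : ℝ) 1) (hδ : δ ≤ 1) :
    ∃ b ∈ Icc (0 : ℝ) 1, a ≤ b ∧ max a δ = (1 - δ) * a + δ * b := by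
  obtain ⟨ha₀, ha₁⟩ := ha
  rcases le_or_gt δ a with hδa | haδ
  · exact ⟨a, ⟨ha₀, ha₁⟩, le_rfl, by rw [max_eq_left hδa]; ring⟩
  have hδpos : 0 < δ := ha₀.trans_lt haδ
  have hstep : 0 ≤ (δ - a) / δ := div_nonneg (by linarith) hδpos.le
  refine ⟨a + (δ - a) / δ, ⟨by linarith, ?_⟩, by linarith, ?_⟩
  · have hgap : 1 - (a + (δ - a) / δ) = a * (1 - δ) / δ := by field_simp; ring
    have : 0 ≤ a * (1 - δ) / δ := div_nonneg (mul_nonneg ha₀ (by linarith)) hδpos.le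
    linarith
  · rw [max_eq_right haδ.le]
    field_simp
    ring

lemma exists_min_eq_convex_combination {a δ : ℝ} (ha : a ∈ Icc (0 : ℝ) 1) (hδ : δ ≤ 1) :
    ∃ b ∈ Icc (0 : ℝ) 1, b ≤ a ∧ min a (1 - δ) = (1 - δ) * a + δ * b := by
  obtain ⟨b, ⟨hb₀, hb₁⟩, hab, hmax⟩ :=
    exists_max_eq_convex_combination (a := 1 - a) ⟨by linarith [ha.2], by linarith [ha.1]⟩ hδ
  refine ⟨1 - b, ⟨by linarith, by linarith⟩, by linarith, ?_⟩
  have hmin : max (1 - a) δ = 1 - min a (1 - δ) := by rw [← max_sub_sub_left, sub_sub_cancel]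
  linarith

lemma exists_sup_const_eq_convex_combination {N : Type*} {z : N → ℝ} {δ : ℝ}
    (hz : z ∈ Icc (0 : N → ℝ) 1) (hδ : δ ≤ 1) :
    ∃ w ∈ Icc (0 : N → ℝ) 1, z ≤ w ∧ (z ⊔ fun _ => δ) = (1 - δ) • z + δ • w := by
  choose w hw hzw heq using fun u => exists_max_eq_convex_combination ⟨hz.1 u, hz.2 u⟩ hδ
  exact ⟨w, ⟨fun u => (hw u).1, fun u => (hw u).2⟩, hzw, funext heq⟩

lemma exists_inf_const_eq_convex_combination {N : Type*} {z : N → ℝ} {δ : ℝ}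
    (hz : z ∈ Icc (0 : N → ℝ) 1) (hδ : δ ≤ 1) :
    ∃ w ∈ Icc (0 : N → ℝ) 1, w ≤ z ∧ (z ⊓ fun _ => 1 - δ) = (1 - δ) • z + δ • w := by
  choose w hw hwz heq using fun u => exists_min_eq_convex_combination ⟨hz.1 u, hz.2 u⟩ hδ
  exact ⟨w, ⟨fun u => (hw u).1, fun u => (hw u).2⟩, hwz, funext heq⟩

section AntitoneGradient

variable {N : Type*} [Fintype N] [DecidableEq N]

def HasAntitonePartialsOn (F' : (N → ℝ) → ((N → ℝ) →L[ℝ] ℝ)) (s : Set (N → ℝ)) : Prop :=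
  ∀ x ∈ s, ∀ y ∈ s, x ≤ y → ∀ u : N, F' y (Pi.single u 1) ≤ F' x (Pi.single u 1)

variable {F : (N → ℝ) → ℝ} {F' : (N → ℝ) → ((N → ℝ) →L[ℝ] ℝ)} {s : Set (N → ℝ)}

lemma HasAntitonePartialsOn.apply_le_apply (hF' : HasAntitonePartialsOn F' s) {x y : N → ℝ}
    (hx : x ∈ s) (hy : y ∈ s) (hxy : x ≤ y) {d : N → ℝ} (hd : 0 ≤ d) : F' y d ≤ F' x d := by
  rw [pi_eq_sum_univ' d, map_sum, map_sum]
  refine Finset.sum_le_sum fun u _ => ?_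
  rw [map_smul, map_smul]
  exact mul_le_mul_of_nonneg_left (hF' x hx y hy hxy u) (hd u)

lemma concaveOn_comp_lineMap_of_le (hs : Convex ℝ s)
    (hF : ∀ x ∈ s, HasFDerivWithinAt F (F' x) s x) (hF' : HasAntitonePartialsOn F' s)
    {x y : N → ℝ} (hx : x ∈ s) (hy : y ∈ s) (hxy : x ≤ y) :
    ConcaveOn ℝ (Icc (0 : ℝ) 1) (fun t => F (AffineMap.lineMap x y t)) := by
  have hmem : MapsTo (AffineMap.lineMap x y) (Icc (0 : ℝ) 1) s :=
    fun t ht => hs.lineMap_mem hx hy ht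
  have hderiv : ∀ t ∈ Icc (0 : ℝ) 1, HasDerivWithinAt (fun t => F (AffineMap.lineMap x y t))
      (F' (AffineMap.lineMap x y t) (y - x)) (Icc 0 1) t := fun t ht =>
    (hF _ (hmem ht)).comp_hasDerivWithinAt t AffineMap.hasDerivWithinAt_lineMap hmem
  have hderivAt : ∀ t ∈ Ioo (0 : ℝ) 1, HasDerivAt (fun t => F (AffineMap.lineMap x y t))
      (F' (AffineMap.lineMap x y t) (y - x)) t := fun t ht =>
    (hderiv t (Ioo_subset_Icc_self ht)).hasDerivAt (Icc_mem_nhds ht.1 ht.2)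
  refine AntitoneOn.concaveOn_of_deriv (convex_Icc 0 1)
    (fun t ht => (hderiv t ht).continuousWithinAt) ?_ ?_ <;> rw [interior_Icc]
  · exact fun t ht => (hderivAt t ht).differentiableAt.differentiableWithinAt
  · intro t ht t' ht' htt'
    rw [(hderivAt t ht).deriv, (hderivAt t' ht').deriv]
    refine hF'.apply_le_apply (hmem (Ioo_subset_Icc_self ht)) (hmem (Ioo_subset_Icc_self ht'))
      ?_ (sub_nonneg.2 hxy)
    simp only [AffineMap.lineMap_apply_module']
    exact add_le_add_left (smul_le_smul_of_nonneg_right htt' (sub_nonneg.2 hxy)) x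

lemma convex_combination_le_of_le (hs : Convex ℝ s)
    (hF : ∀ x ∈ s, HasFDerivWithinAt F (F' x) s x) (hF' : HasAntitonePartialsOn F' s)
    {x y : N → ℝ} (hx : x ∈ s) (hy : y ∈ s) (hxy : x ≤ y) {t : ℝ} (ht : t ∈ Icc (0 : ℝ) 1) :
    (1 - t) * F x + t * F y ≤ F ((1 - t) • x + t • y) := by
  have := (concaveOn_comp_lineMap_of_le hs hF hF' hx hy hxy).2 (left_mem_Icc.2 zero_le_one)
    (right_mem_Icc.2 zero_le_one) (sub_nonneg.2 ht.2) ht.1 (sub_add_cancel 1 t)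
  simpa [AffineMap.lineMap_apply_module] using this

lemma one_sub_mul_le_of_le_or_le (hs : Convex ℝ s)
    (hF : ∀ x ∈ s, HasFDerivWithinAt F (F' x) s x) (hF' : HasAntitonePartialsOn F' s)
    (hnn : ∀ x ∈ s, 0 ≤ F x) {x y : N → ℝ} (hx : x ∈ s) (hy : y ∈ s) (hxy : x ≤ y ∨ y ≤ x)
    {t : ℝ} (ht : t ∈ Icc (0 : ℝ) 1) :
    (1 - t) * F x ≤ F ((1 - t) • x + t • y) := by
  have hty : 0 ≤ t * F y := mul_nonneg ht.1 (hnn y hy)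
  rcases hxy with hxy | hyx
  · linarith [convex_combination_le_of_le hs hF hF' hx hy hxy ht]
  · have := convex_combination_le_of_le hs hF hF' hy hx hyx ⟨sub_nonneg.2 ht.2, by linarith [ht.1]⟩
    rw [sub_sub_cancel, add_comm (t • y)] at this
    linarith

end AntitoneGradient

theorem stmt_8 {N : Type*} [Fintype N] [DecidableEq N]
    (F : (N → ℝ) → ℝ) (F' : (N → ℝ) → ((N → ℝ) →L[ℝ] ℝ))
    (hdiff : ∀ x ∈ Set.Icc (0 : N → ℝ) 1, HasFDerivWithinAt F (F' x) (Set.Icc 0 1) x)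
    (hnn : ∀ x ∈ Set.Icc (0 : N → ℝ) 1, 0 ≤ F x)
    (hanti : ∀ x ∈ Set.Icc (0 : N → ℝ) 1, ∀ y ∈ Set.Icc (0 : N → ℝ) 1, x ≤ y →
      ∀ u : N, F' y (Pi.single u 1) ≤ F' x (Pi.single u 1))
    (z : N → ℝ) (hz : z ∈ Set.Icc (0 : N → ℝ) 1) (δ : ℝ) (hδ : δ ∈ Set.Icc (0 : ℝ) 1) :
    (1 - δ) * F z ≤ F (z ⊔ fun _ => δ) ∧ (1 - δ) * F z ≤ F (z ⊓ fun _ => 1 - δ) := by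
  have key : ∀ w ∈ Icc (0 : N → ℝ) 1, z ≤ w ∨ w ≤ z → (1 - δ) * F z ≤ F ((1 - δ) • z + δ • w) :=
    fun w hw hzw => one_sub_mul_le_of_le_or_le (convex_Icc 0 1) hdiff hanti hnn hz hw hzw hδ
  obtain ⟨w₁, hw₁, hzw₁, hsup⟩ := exists_sup_const_eq_convex_combination hz hδ.2
  obtain ⟨w₂, hw₂, hw₂z, hinf⟩ := exists_inf_const_eq_convex_combination hz hδ.2
  rw [hsup, hinf]
  exact ⟨key w₁ hw₁ (.inl hzw₁), key w₂ hw₂ (.inr hw₂z)⟩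
end

section
/- Let N be a finite set and let F: ℝ^N → ℝ be differentiable on the box [0,1]^N with an antitone gradient on the box (i.e., ∇F(x) ≥ ∇F(y) coordinatewise whenever x ≤ y coordinatewise, x, y ∈ [0,1]^N). Let x ∈ [0,1]^N and let d ∈ ℝ^N with d ≥ 0 coordinatewise and x + d ∈ [0,1]^N. Then the function g(t) := F(x + t·d) is concave on the interval [0,1]. -/
/-! Along the segment `t ↦ x + t • d` the derivative of `F` is `t ↦ F' (x + t • d) d`. Since
`d ≥ 0`, the points `x + t • d` increase with `t`, so the partial derivatives, and with them
their `d`-weighted sum, decrease; a function on an interval with antitone derivative is concave. -/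

open Set

theorem LinearMap.apply_le_apply_of_apply_single_le {ι R : Type*} [Fintype ι] [DecidableEq ι]
    [CommRing R] [PartialOrder R] [IsOrderedRing R] {L L' : (ι → R) →ₗ[R] R}
    (h : ∀ u, L (Pi.single u 1) ≤ L' (Pi.single u 1)) {d : ι → R} (hd : 0 ≤ d) :
    L d ≤ L' d := by
  rw [pi_eq_sum_univ' d, map_sum, map_sum]
  gcongr with u
  simp only [map_smul, smul_eq_mul]
  exact mul_le_mul_of_nonneg_left (h u) (hd u)

theorem concaveOn_Icc_of_hasDerivWithinAt_of_antitoneOn {a b : ℝ} {f f' : ℝ → ℝ}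
    (hf : ∀ t ∈ Icc a b, HasDerivWithinAt f (f' t) (Icc a b) t)
    (hf' : AntitoneOn f' (Icc a b)) : ConcaveOn ℝ (Icc a b) f := by
  have hderiv : ∀ t ∈ Ioo a b, HasDerivAt f (f' t) t := fun t ht =>
    (hf t (Ioo_subset_Icc_self ht)).hasDerivAt (Icc_mem_nhds ht.1 ht.2)
  rw [← interior_Icc] at hderiv
  refine AntitoneOn.concaveOn_of_deriv (convex_Icc a b)
    (fun t ht => (hf t ht).continuousWithinAt)
    (fun t ht => (hderiv t ht).differentiableAt.differentiableWithinAt) ?_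
  refine (hf'.mono interior_subset).congr fun t ht => ?_
  exact ((hderiv t ht).deriv).symm

theorem hasDerivWithinAt_comp_add_smul_of_convex {E : Type*} [NormedAddCommGroup E]
    [NormedSpace ℝ E] {F : E → ℝ} {F' : E → E →L[ℝ] ℝ} {s : Set E} (hs : Convex ℝ s)
    (hF : ∀ y ∈ s, HasFDerivWithinAt F (F' y) s y) {x d : E} (hx : x ∈ s) (hxd : x + d ∈ s)
    {t : ℝ} (ht : t ∈ Icc (0 : ℝ) 1) :
    HasDerivWithinAt (fun t : ℝ => F (x + t • d)) (F' (x + t • d) d) (Icc 0 1) t := by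
  have hline : HasDerivWithinAt (fun t : ℝ => x + t • d) d (Icc 0 1) t := by
    simpa using (((hasDerivAt_id t).smul_const d).const_add x).hasDerivWithinAt
  exact (hF _ (hs.add_smul_mem hx hxd ht)).comp_hasDerivWithinAt t hline
    fun _ hr => hs.add_smul_mem hx hxd hr

theorem stmt_9 {N : Type*} [Fintype N] [DecidableEq N]
    (F : (N → ℝ) → ℝ) (F' : (N → ℝ) → ((N → ℝ) →L[ℝ] ℝ))
    (hdiff : ∀ x ∈ Set.Icc (0 : N → ℝ) 1, HasFDerivWithinAt F (F' x) (Set.Icc 0 1) x)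
    (hanti : ∀ x ∈ Set.Icc (0 : N → ℝ) 1, ∀ y ∈ Set.Icc (0 : N → ℝ) 1, x ≤ y →
      ∀ u : N, F' y (Pi.single u 1) ≤ F' x (Pi.single u 1))
    (x d : N → ℝ) (hx : x ∈ Set.Icc (0 : N → ℝ) 1) (hd : 0 ≤ d)
    (hxd : x + d ∈ Set.Icc (0 : N → ℝ) 1) :
    ConcaveOn ℝ (Set.Icc (0 : ℝ) 1) (fun t : ℝ => F (x + t • d)) := by
  have hmem : ∀ t ∈ Icc (0 : ℝ) 1, x + t • d ∈ Icc (0 : N → ℝ) 1 :=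
    fun _ ht => (convex_Icc 0 1).add_smul_mem hx hxd ht
  refine concaveOn_Icc_of_hasDerivWithinAt_of_antitoneOn
    (fun _ ht => hasDerivWithinAt_comp_add_smul_of_convex (convex_Icc 0 1) hdiff hx hxd ht)
    fun s hs t ht hst => ?_
  have hpoints : x + s • d ≤ x + t • d :=
    add_le_add_right (smul_le_smul_of_nonneg_right hst hd) x
  exact LinearMap.apply_le_apply_of_apply_single_le (L := (F' (x + t • d)).toLinearMap)
    (hanti _ (hmem s hs) _ (hmem t ht) hpoints) hd
end

section
/- Let N be a finite set and let F: ℝ^N → ℝ be differentiable on the box [0,1]^N, non-negative on [0,1]^N, and have an antitone gradient on the box (i.e., ∇F(x) ≥ ∇F(y) coordinatewise whenever x ≤ y coordinatewise, x, y ∈ [0,1]^N). Then F((1/2)·1_N) ≥ (1/4)·F(z) for every z ∈ [0,1]^N. -/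
/-!
A function with antitone gradient is DR-submodular: its increment `F (x + d) - F x` along a
nonnegative direction `d` decreases as `x` increases, because the derivative of
`t ↦ F (x + t • d) - F (y + t • d)` is `F' (x + t • d) d - F' (y + t • d) d ≥ 0` for `x ≤ y`.
Write `c = ½·1` and split `z = a + b` with `a = z ⊓ c` and `b = z - a`, so that `0 ≤ a, b ≤ c`.
Submodularity at `0 ≤ a` gives `F z ≤ F a + F b - F 0`, and at `w ≤ c` with increment `c - w`
it gives `F w ≤ 2 F c - F (2 c - w) ≤ 2 F c`. Hence `F z ≤ 4 F c`, using nonnegativity of `F`.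
-/

open Set

def AntitoneGradientOn {N : Type*} [DecidableEq N] (F' : (N → ℝ) → ((N → ℝ) →L[ℝ] ℝ))
    (s : Set (N → ℝ)) : Prop :=
  ∀ x ∈ s, ∀ y ∈ s, x ≤ y → ∀ u : N, F' y (Pi.single u 1) ≤ F' x (Pi.single u 1)

section

variable {N : Type*} [Fintype N] {F : (N → ℝ) → ℝ} {F' : (N → ℝ) → ((N → ℝ) →L[ℝ] ℝ)}
  {s : Set (N → ℝ)}

lemma hasDerivWithinAt_comp_add_smul (hs : Convex ℝ s)
    (hF : ∀ x ∈ s, HasFDerivWithinAt F (F' x) s x) {x d : N → ℝ} (hx : x ∈ s) (hxd : x + d ∈ s)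
    {t : ℝ} (ht : t ∈ Icc (0 : ℝ) 1) :
    HasDerivWithinAt (fun t : ℝ => F (x + t • d)) (F' (x + t • d) d) (Icc 0 1) t := by
  have hline : HasDerivWithinAt (fun t : ℝ => x + t • d) d (Icc 0 1) t := by
    simpa using (((hasDerivAt_id t).smul_const d).const_add x).hasDerivWithinAt
  exact (hF _ (hs.add_smul_mem hx hxd ht)).comp_hasDerivWithinAt t hline
    fun _ hτ => hs.add_smul_mem hx hxd hτ

variable [DecidableEq N]

lemma LinearMap.apply_le_apply_of_single_le {φ ψ : (N → ℝ) →ₗ[ℝ] ℝ}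
    (h : ∀ u, φ (Pi.single u 1) ≤ ψ (Pi.single u 1)) {d : N → ℝ} (hd : 0 ≤ d) :
    φ d ≤ ψ d := by
  rw [pi_eq_sum_univ' d, map_sum, map_sum]
  gcongr with u
  simp only [map_smul, smul_eq_mul]
  exact mul_le_mul_of_nonneg_left (h u) (hd u)

lemma AntitoneGradientOn.apply_le (hF' : AntitoneGradientOn F' s) {x y d : N → ℝ} (hx : x ∈ s)
    (hy : y ∈ s) (hxy : x ≤ y) (hd : 0 ≤ d) : F' y d ≤ F' x d :=
  LinearMap.apply_le_apply_of_single_le (φ := (F' y).toLinearMap) (hF' x hx y hy hxy) hd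

lemma AntitoneGradientOn.map_add_sub_le (hs : Convex ℝ s)
    (hF : ∀ x ∈ s, HasFDerivWithinAt F (F' x) s x) (hF' : AntitoneGradientOn F' s)
    {x y d : N → ℝ} (hx : x ∈ s) (hy : y ∈ s) (hxd : x + d ∈ s) (hyd : y + d ∈ s)
    (hxy : x ≤ y) (hd : 0 ≤ d) :
    F (y + d) - F y ≤ F (x + d) - F x := by
  have hderiv : ∀ t ∈ Icc (0 : ℝ) 1,
      HasDerivWithinAt (fun t : ℝ => F (x + t • d) - F (y + t • d))
        (F' (x + t • d) d - F' (y + t • d) d) (Icc 0 1) t := fun t ht =>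
    (hasDerivWithinAt_comp_add_smul hs hF hx hxd ht).sub
      (hasDerivWithinAt_comp_add_smul hs hF hy hyd ht)
  have hmono : MonotoneOn (fun t : ℝ => F (x + t • d) - F (y + t • d)) (Icc 0 1) := by
    refine monotoneOn_of_hasDerivWithinAt_nonneg (convex_Icc 0 1)
      (f' := fun t => F' (x + t • d) d - F' (y + t • d) d)
      (fun t ht => (hderiv t ht).continuousWithinAt) (fun t ht => ?_) (fun t ht => ?_)
    · exact (hderiv t (interior_subset ht)).mono interior_subset
    · have ht := interior_subset ht
      exact sub_nonneg.2 <| hF'.apply_le (hs.add_smul_mem hx hxd ht)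
        (hs.add_smul_mem hy hyd ht) (add_le_add_left hxy _) hd
  have h01 := hmono (left_mem_Icc.2 zero_le_one) (right_mem_Icc.2 zero_le_one) zero_le_one
  simp only [zero_smul, add_zero, one_smul] at h01
  linarith

lemma AntitoneGradientOn.map_add_map_reflect_le (hs : Convex ℝ s)
    (hF : ∀ x ∈ s, HasFDerivWithinAt F (F' x) s x) (hF' : AntitoneGradientOn F' s)
    {w c : N → ℝ} (hw : w ∈ s) (hc : c ∈ s) (hreflect : c + (c - w) ∈ s) (hwc : w ≤ c) :
    F w + F (c + (c - w)) ≤ 2 * F c := by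
  have := hF'.map_add_sub_le hs hF hw hc (by rwa [add_sub_cancel]) hreflect hwc
    (sub_nonneg.2 hwc)
  rw [add_sub_cancel] at this
  linarith

lemma AntitoneGradientOn.map_add_add_map_zero_le (hs : Convex ℝ s)
    (hF : ∀ x ∈ s, HasFDerivWithinAt F (F' x) s x) (hF' : AntitoneGradientOn F' s)
    {a b : N → ℝ} (h0 : 0 ∈ s) (ha : a ∈ s) (hb : b ∈ s) (hab : a + b ∈ s)
    (ha0 : 0 ≤ a) (hb0 : 0 ≤ b) :
    F (a + b) + F 0 ≤ F a + F b := by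
  have := hF'.map_add_sub_le hs hF h0 ha (by rwa [zero_add]) hab ha0 hb0
  rw [zero_add] at this
  linarith

end

theorem stmt_10 {N : Type*} [Fintype N] [DecidableEq N]
    (F : (N → ℝ) → ℝ) (F' : (N → ℝ) → ((N → ℝ) →L[ℝ] ℝ))
    (hdiff : ∀ x ∈ Set.Icc (0 : N → ℝ) 1, HasFDerivWithinAt F (F' x) (Set.Icc 0 1) x)
    (hnn : ∀ x ∈ Set.Icc (0 : N → ℝ) 1, 0 ≤ F x)
    (hanti : ∀ x ∈ Set.Icc (0 : N → ℝ) 1, ∀ y ∈ Set.Icc (0 : N → ℝ) 1, x ≤ y →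
      ∀ u : N, F' y (Pi.single u 1) ≤ F' x (Pi.single u 1)) :
    ∀ z ∈ Set.Icc (0 : N → ℝ) 1, (1 / 4 : ℝ) * F z ≤ F (fun _ => (1 / 2 : ℝ)) := by
  intro z hz
  set c : N → ℝ := fun _ => 1 / 2
  have hc0 : 0 ≤ c := fun _ => by norm_num [c]
  have hcc : c + c = 1 := by ext; norm_num [c]
  have hmem : ∀ w : N → ℝ, 0 ≤ w → w ≤ c → w ∈ Icc (0 : N → ℝ) 1 := fun w hw0 hwc =>
    ⟨hw0, hwc.trans (le_add_of_nonneg_left hc0) |>.trans_eq hcc⟩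
  have hhalf : ∀ w : N → ℝ, 0 ≤ w → w ≤ c → F w ≤ 2 * F c := by
    intro w hw0 hwc
    have hw := hmem w hw0 hwc
    have hreflect : c + (c - w) ∈ Icc (0 : N → ℝ) 1 := by
      rw [← add_sub_assoc, hcc]
      exact ⟨sub_nonneg.2 hw.2, sub_le_self _ hw0⟩
    linarith [AntitoneGradientOn.map_add_map_reflect_le (convex_Icc 0 1) hdiff hanti hw
      (hmem c hc0 le_rfl) hreflect hwc, hnn _ hreflect]
  set a := z ⊓ c
  have ha0 : 0 ≤ a := le_inf hz.1 hc0
  have hb0 : 0 ≤ z - a := sub_nonneg.2 inf_le_left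
  have hbc : z - a ≤ c := sub_le_iff_le_add'.2 <| by
    rw [show a + c = (z + c) ⊓ (c + c) from inf_add ..]
    exact le_inf (le_add_of_nonneg_right hc0) (hz.2.trans_eq hcc.symm)
  have hsplit := AntitoneGradientOn.map_add_add_map_zero_le (convex_Icc 0 1) hdiff hanti
    (hmem 0 le_rfl hc0) (hmem a ha0 inf_le_right) (hmem _ hb0 hbc)
    (by rwa [add_sub_cancel]) ha0 hb0
  rw [add_sub_cancel] at hsplit
  linarith [hhalf a ha0 inf_le_right, hhalf _ hb0 hbc, hnn 0 (hmem 0 le_rfl hc0)]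
end

section
/- Let N be a finite set and let F: ℝ^N → ℝ be differentiable on the box [0,1]^N, non-negative on [0,1]^N, and have an antitone gradient on the box (i.e., ∇F(x) ≥ ∇F(y) coordinatewise whenever x ≤ y coordinatewise, x, y ∈ [0,1]^N). Then for every z ∈ [0,1]^N and δ ∈ [0,1], F((z ∨ (δ·1_N)) ∧ ((1−δ)·1_N)) ≥ (1 − 2δ)·F(z). -/
/-!
Antitone partial derivatives make `F` concave along nonnegative directions, so for `a ≤ b` in the
box the mean value theorem gives `F' b (b - a) ≤ F b - F a ≤ F' a (b - a)`. Raising `z` to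
`x = z ⊔ δ` therefore costs at most `F' x (x - z)`. Let `v` push `x` up to `1` on the coordinates
where `∂ᵤF(x) < 0`; coordinatewise `δ • F' x v ≤ (1 - δ) • F' x (x - z)`, and `F (x + v) ≥ 0` gives
`-F' x v ≤ F x`, whence `(1 - δ) F z ≤ F x`. The reflection `y ↦ 1 - y` preserves the hypotheses
and turns truncation at `1 - δ` into raising to `δ`, and `1 - 2δ ≤ (1 - δ)²`.
-/

open Set

def GradientAntitoneOn {N : Type*} [DecidableEq N] (F' : (N → ℝ) → (N → ℝ) →L[ℝ] ℝ)
    (s : Set (N → ℝ)) : Prop :=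
  ∀ x ∈ s, ∀ y ∈ s, x ≤ y → ∀ u : N, F' y (Pi.single u 1) ≤ F' x (Pi.single u 1)

theorem ContinuousLinearMap.apply_eq_sum_mul_apply_single {N : Type*} [Fintype N]
    [DecidableEq N] (L : (N → ℝ) →L[ℝ] ℝ) (d : N → ℝ) :
    L d = ∑ u, d u * L (Pi.single u 1) := by
  conv_lhs => rw [pi_eq_sum_univ' d]
  simp only [map_sum, map_smul, smul_eq_mul]

theorem mul_max_sub_le_mul_one_sub_max {z δ : ℝ} (hz : z ∈ Icc (0 : ℝ) 1)
    (hδ : δ ∈ Icc (0 : ℝ) 1) : (1 - δ) * (max z δ - z) ≤ δ * (1 - max z δ) := by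
  obtain ⟨hz0, hz1⟩ := hz
  obtain ⟨hδ0, hδ1⟩ := hδ
  rcases le_total δ z with h | h
  · rw [max_eq_left h, sub_self, mul_zero]
    exact mul_nonneg hδ0 (sub_nonneg.2 hz1)
  · rw [max_eq_right h]
    nlinarith

theorem sup_const_mem_Icc {N : Type*} {z : N → ℝ} {δ : ℝ} (hz : z ∈ Icc (0 : N → ℝ) 1)
    (hδ : δ ∈ Icc (0 : ℝ) 1) : (z ⊔ fun _ => δ) ∈ Icc (0 : N → ℝ) 1 :=
  ⟨le_sup_of_le_left hz.1, sup_le hz.2 fun _ => hδ.2⟩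

theorem exists_apply_sub_eq_sub_of_le {N : Type*} [Fintype N] {F : (N → ℝ) → ℝ}
    {F' : (N → ℝ) → (N → ℝ) →L[ℝ] ℝ} {s : Set (N → ℝ)}
    (hF : ∀ x ∈ s, HasFDerivWithinAt F (F' x) s x) (hs : Convex ℝ s)
    {a b : N → ℝ} (ha : a ∈ s) (hb : b ∈ s) (hab : a ≤ b) :
    ∃ p ∈ s ∩ Icc a b, F b - F a = F' p (b - a) := by
  obtain ⟨p, hp, hFp⟩ := domain_mvt hF hs ha hb
  exact ⟨p, ⟨hs.segment_subset ha hb hp, segment_subset_Icc hab hp⟩, hFp⟩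

namespace GradientAntitoneOn

variable {N : Type*} [Fintype N] [DecidableEq N] {F : (N → ℝ) → ℝ}
  {F' : (N → ℝ) → (N → ℝ) →L[ℝ] ℝ} {s : Set (N → ℝ)}

theorem apply_le_apply_of_nonneg (hF' : GradientAntitoneOn F' s) {x y d : N → ℝ}
    (hx : x ∈ s) (hy : y ∈ s) (hxy : x ≤ y) (hd : 0 ≤ d) : F' y d ≤ F' x d := by
  rw [(F' y).apply_eq_sum_mul_apply_single, (F' x).apply_eq_sum_mul_apply_single]
  exact Finset.sum_le_sum fun u _ => mul_le_mul_of_nonneg_left (hF' x hx y hy hxy u) (hd u)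

theorem apply_sub_le_sub (hF' : GradientAntitoneOn F' s)
    (hF : ∀ x ∈ s, HasFDerivWithinAt F (F' x) s x) (hs : Convex ℝ s)
    {a b : N → ℝ} (ha : a ∈ s) (hb : b ∈ s) (hab : a ≤ b) :
    F' b (b - a) ≤ F b - F a := by
  obtain ⟨p, ⟨hp, -, hpb⟩, hFp⟩ := exists_apply_sub_eq_sub_of_le hF hs ha hb hab
  exact hFp ▸ hF'.apply_le_apply_of_nonneg hp hb hpb (sub_nonneg.2 hab)

theorem sub_le_apply_sub (hF' : GradientAntitoneOn F' s)
    (hF : ∀ x ∈ s, HasFDerivWithinAt F (F' x) s x) (hs : Convex ℝ s)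
    {a b : N → ℝ} (ha : a ∈ s) (hb : b ∈ s) (hab : a ≤ b) :
    F b - F a ≤ F' a (b - a) := by
  obtain ⟨p, ⟨hp, hap, -⟩, hFp⟩ := exists_apply_sub_eq_sub_of_le hF hs ha hb hab
  exact hFp ▸ hF'.apply_le_apply_of_nonneg ha hp hap (sub_nonneg.2 hab)

theorem one_sub_mul_le_apply_sup_const (hF' : GradientAntitoneOn F' (Icc 0 1))
    (hF : ∀ x ∈ Icc (0 : N → ℝ) 1, HasFDerivWithinAt F (F' x) (Icc 0 1) x)
    (hF₀ : ∀ x ∈ Icc (0 : N → ℝ) 1, 0 ≤ F x) {z : N → ℝ} (hz : z ∈ Icc (0 : N → ℝ) 1)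
    {δ : ℝ} (hδ : δ ∈ Icc (0 : ℝ) 1) :
    (1 - δ) * F z ≤ F (z ⊔ fun _ => δ) := by
  set x : N → ℝ := z ⊔ fun _ => δ
  have hx : x ∈ Icc (0 : N → ℝ) 1 := sup_const_mem_Icc hz hδ
  set v : N → ℝ := fun u => if F' x (Pi.single u 1) < 0 then 1 - x u else 0
  have hv : 0 ≤ v := fun u => by
    dsimp only [v]
    split_ifs
    exacts [sub_nonneg.2 (hx.2 u), le_rfl]
  have hxv : x + v ∈ Icc (0 : N → ℝ) 1 := by
    refine ⟨add_nonneg hx.1 hv, fun u => ?_⟩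
    dsimp only [v, Pi.add_apply]
    split_ifs
    exacts [by simp, by simpa using hx.2 u]
  have hxxv : x ≤ x + v := le_add_of_nonneg_right hv
  have hlow := hF'.apply_sub_le_sub hF (convex_Icc 0 1) hz hx le_sup_left
  have hup := hF'.sub_le_apply_sub hF (convex_Icc 0 1) hx hxv hxxv
  rw [add_sub_cancel_left] at hup
  have hcoord : δ * F' x v ≤ (1 - δ) * F' x (x - z) := by
    rw [(F' x).apply_eq_sum_mul_apply_single, (F' x).apply_eq_sum_mul_apply_single,
      Finset.mul_sum, Finset.mul_sum]
    refine Finset.sum_le_sum fun u _ => ?_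
    have hmax := mul_max_sub_le_mul_one_sub_max ⟨hz.1 u, hz.2 u⟩ hδ
    dsimp only [v, x, Pi.sub_apply, Pi.sup_apply]
    split_ifs with hg
    · nlinarith [mul_le_mul_of_nonpos_right hmax hg.le]
    · rw [zero_mul, mul_zero]
      exact mul_nonneg (sub_nonneg.2 hδ.2) (mul_nonneg (sub_nonneg.2 le_sup_left) (not_lt.1 hg))
  nlinarith [hF₀ _ hxv, mul_le_mul_of_nonneg_left hlow (sub_nonneg.2 hδ.2), hδ.1]

theorem one_sub_mul_le_apply_inf_const (hF' : GradientAntitoneOn F' (Icc 0 1))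
    (hF : ∀ x ∈ Icc (0 : N → ℝ) 1, HasFDerivWithinAt F (F' x) (Icc 0 1) x)
    (hF₀ : ∀ x ∈ Icc (0 : N → ℝ) 1, 0 ≤ F x) {x : N → ℝ} (hx : x ∈ Icc (0 : N → ℝ) 1)
    {δ : ℝ} (hδ : δ ∈ Icc (0 : ℝ) 1) :
    (1 - δ) * F x ≤ F (x ⊓ fun _ => 1 - δ) := by
  have hrefl : MapsTo (fun y => 1 - y) (Icc (0 : N → ℝ) 1) (Icc 0 1) := fun y hy =>
    ⟨sub_nonneg.2 hy.2, sub_le_self _ hy.1⟩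
  have hG' : GradientAntitoneOn (fun y => -F' (1 - y)) (Icc 0 1) := fun y hy y' hy' hyy' u => by
    simpa using hF' _ (hrefl hy') _ (hrefl hy) (sub_le_sub_left hyy' 1) u
  have hG : ∀ y ∈ Icc (0 : N → ℝ) 1,
      HasFDerivWithinAt (fun y => F (1 - y)) (-F' (1 - y)) (Icc 0 1) y := fun y hy =>
    ((hF _ (hrefl hy)).comp y ((hasFDerivAt_id y).const_sub 1).hasFDerivWithinAt
      hrefl).congr_fderiv (by ext; simp)
  have h := one_sub_mul_le_apply_sup_const hG' hG (fun y hy => hF₀ _ (hrefl hy)) (hrefl hx) hδ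
  have hdual : (1 - ((1 - x) ⊔ fun _ => δ)) = x ⊓ fun _ => 1 - δ := by
    ext u
    simp [← min_sub_sub_left]
  simpa [hdual] using h

end GradientAntitoneOn

theorem stmt_11 {N : Type*} [Fintype N] [DecidableEq N]
    (F : (N → ℝ) → ℝ) (F' : (N → ℝ) → ((N → ℝ) →L[ℝ] ℝ))
    (hdiff : ∀ x ∈ Set.Icc (0 : N → ℝ) 1, HasFDerivWithinAt F (F' x) (Set.Icc 0 1) x)
    (hnn : ∀ x ∈ Set.Icc (0 : N → ℝ) 1, 0 ≤ F x)
    (hanti : ∀ x ∈ Set.Icc (0 : N → ℝ) 1, ∀ y ∈ Set.Icc (0 : N → ℝ) 1, x ≤ y →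
      ∀ u : N, F' y (Pi.single u 1) ≤ F' x (Pi.single u 1))
    (z : N → ℝ) (hz : z ∈ Set.Icc (0 : N → ℝ) 1) (δ : ℝ) (hδ : δ ∈ Set.Icc (0 : ℝ) 1) :
    (1 - 2 * δ) * F z ≤ F ((z ⊔ fun _ => δ) ⊓ fun _ => 1 - δ) := by
  have hF' : GradientAntitoneOn F' (Icc 0 1) := hanti
  have hsup := hF'.one_sub_mul_le_apply_sup_const hdiff hnn hz hδ
  have hinf := hF'.one_sub_mul_le_apply_inf_const hdiff hnn (sup_const_mem_Icc hz hδ) hδ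
  nlinarith [mul_le_mul_of_nonneg_left hsup (sub_nonneg.2 hδ.2),
    mul_nonneg (sq_nonneg δ) (hnn z hz)]
end

section
/- Let f be a submodular set function on a finite ground set N, let X ⊆ Y ⊆ N, and define Z := X ∪ {u ∈ Y ∖ X : f(X ∪ {u}) − f(X) > 0}. Then for every set W with X ⊆ W ⊆ Y, it holds that f(Z) ≥ f(W) − Σ_{u ∈ Y∖X} [(f(X ∪ {u}) − f(X)) − (f(Y) − f(Y ∖ {u}))]. -/
/-!
Write `m u := f(u | X)`, `g u := f(u | Y - u)` and `P := Z \ X`, the elements of `Y \ X`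
with `m u > 0`; by submodularity `g ≤ m` on `Y \ X`. Adding the elements of `W \ X` to `X`
one at a time gives `f W ≤ f X + ∑_{W \ X} m ≤ f X + ∑_P m`, since dropping nonpositive
terms and adding positive ones only increases the sum. Adding the elements of `P` to `X`
one at a time, each marginal is at least its marginal `g` at the top `Y`, so
`f X + ∑_P g ≤ f Z`. The two bounds differ by `∑_P (m - g) ≤ ∑_{Y \ X} (m - g)`.
-/

open Finset

namespace IsSubmodular

variable {N : Type*} [DecidableEq N] {f : Finset N → ℝ}

theorem marginal_erase_le (hf : IsSubmodular f) {S T : Finset N} (hST : S ⊆ T) {u : N}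
    (huT : u ∈ T) (huS : u ∉ S) : f T - f (T.erase u) ≤ f (insert u S) - f S := by
  simpa only [insert_erase huT] using
    hf S (T.erase u) (subset_erase.mpr ⟨hST, huS⟩) u (notMem_erase u T)

theorem union_le_add_sum_marginal (hf : IsSubmodular f) (X : Finset N) {D : Finset N}
    (hD : Disjoint D X) : f (X ∪ D) ≤ f X + ∑ u ∈ D, (f (insert u X) - f X) := by
  induction D using Finset.induction_on with
  | empty => simp
  | @insert a s has ih =>
    obtain ⟨haX, hsX⟩ := disjoint_insert_left.mp hD
    have hstep := hf X (X ∪ s) subset_union_left a (by simp [haX, has])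
    rw [union_insert, sum_insert has]
    linarith [ih hsX]

theorem add_sum_marginal_erase_le_union (hf : IsSubmodular f) {X Y D : Finset N}
    (hXY : X ⊆ Y) (hDY : D ⊆ Y) (hD : Disjoint D X) :
    f X + ∑ u ∈ D, (f Y - f (Y.erase u)) ≤ f (X ∪ D) := by
  induction D using Finset.induction_on with
  | empty => simp
  | @insert a s has ih =>
    obtain ⟨haX, hsX⟩ := disjoint_insert_left.mp hD
    obtain ⟨haY, hsY⟩ := insert_subset_iff.mp hDY
    have hstep := hf.marginal_erase_le (union_subset hXY hsY) haY (by simp [haX, has])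
    rw [union_insert, sum_insert has]
    linarith [ih hsY hsX]

end IsSubmodular

theorem Finset.sum_le_sum_filter_pos {ι : Type*} {s t : Finset ι} (hst : s ⊆ t)
    (g : ι → ℝ) :
    ∑ i ∈ s, g i ≤ ∑ i ∈ t.filter (fun i => 0 < g i), g i := by
  rw [← sum_filter_add_sum_filter_not s (fun i => 0 < g i)]
  have hneg : ∑ i ∈ s.filter (fun i => ¬ 0 < g i), g i ≤ 0 :=
    sum_nonpos fun i hi => not_lt.mp (mem_filter.mp hi).2
  have hpos :
      ∑ i ∈ s.filter (fun i => 0 < g i), g i ≤ ∑ i ∈ t.filter (fun i => 0 < g i), g i :=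
    sum_le_sum_of_subset_of_nonneg (filter_subset_filter _ hst)
      fun i hi _ => (mem_filter.mp hi).2.le
  linarith

theorem stmt_12 {N : Type*} [DecidableEq N] (f : Finset N → ℝ)
    (hsub : ∀ S T : Finset N, S ⊆ T → ∀ e ∉ T,
      f (insert e T) - f T ≤ f (insert e S) - f S)
    (X Y : Finset N) (hXY : X ⊆ Y)
    (W : Finset N) (hXW : X ⊆ W) (hWY : W ⊆ Y) :
    f W - ∑ u ∈ Y \ X, ((f (insert u X) - f X) - (f Y - f (Y.erase u))) ≤
      f (X ∪ (Y \ X).filter fun u => 0 < f (insert u X) - f X) := by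
  have hf : IsSubmodular f := hsub
  set m : N → ℝ := fun u => f (insert u X) - f X
  set g : N → ℝ := fun u => f Y - f (Y.erase u)
  set P := (Y \ X).filter fun u => 0 < m u
  have hP : P ⊆ Y \ X := filter_subset _ _
  have hW : f W ≤ f X + ∑ u ∈ W \ X, m u := by
    simpa only [union_sdiff_of_subset hXW] using
      hf.union_le_add_sum_marginal X (D := W \ X) sdiff_disjoint
  have hWP : ∑ u ∈ W \ X, m u ≤ ∑ u ∈ P, m u :=
    sum_le_sum_filter_pos (sdiff_subset_sdiff hWY le_rfl) m
  have hPlow : f X + ∑ u ∈ P, g u ≤ f (X ∪ P) :=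
    hf.add_sum_marginal_erase_le_union hXY (hP.trans sdiff_subset)
      (disjoint_of_subset_left hP sdiff_disjoint)
  have hgap : ∑ u ∈ P, (m u - g u) ≤ ∑ u ∈ Y \ X, (m u - g u) :=
    sum_le_sum_of_subset_of_nonneg hP fun u hu _ => by
      obtain ⟨huY, huX⟩ := mem_sdiff.mp hu
      linarith [hf.marginal_erase_le hXY huY huX]
  rw [sum_sub_distrib] at hgap
  linarith
end

section
/- Let N be a finite set and let F: ℝ^N → ℝ be differentiable on the box [0,1]^N with an antitone gradient on the box (i.e., ∇F(x) ≥ ∇F(y) coordinatewise whenever x ≤ y coordinatewise, x, y ∈ [0,1]^N). Let x, x', y, y' ∈ [0,1]^N with x ≤ x' and y' ≤ y coordinatewise, let r ∈ [0,1]^N, and let γ ∈ ℝ. If Σ_{u∈N} [r_u·∂_u F(x') − (1−r_u)·∂_u F(y')] ≤ Σ_{u∈N} [r_u·∂_u F(x) − (1−r_u)·∂_u F(y)] − γ, then Σ_{u∈N} [∂_u F(x') − ∂_u F(y')] ≤ Σ_{u∈N} [∂_u F(x) − ∂_u F(y)] − γ. -/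
open Finset

/-- Moving the weights `r i` to `1` can only help: the complementary part
`(1 - r i) * (p i - p' i) + r i * (q' i - q i)` is nonnegative. -/
theorem Finset.sum_sub_le_sum_sub_of_weighted {ι : Type*} (s : Finset ι) {p p' q q' r : ι → ℝ}
    {γ : ℝ} (hp : ∀ i ∈ s, p' i ≤ p i) (hq : ∀ i ∈ s, q i ≤ q' i)
    (hr : ∀ i ∈ s, r i ∈ Set.Icc (0 : ℝ) 1)
    (h : ∑ i ∈ s, (r i * p' i - (1 - r i) * q' i) ≤
      ∑ i ∈ s, (r i * p i - (1 - r i) * q i) - γ) :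
    ∑ i ∈ s, (p' i - q' i) ≤ ∑ i ∈ s, (p i - q i) - γ := by
  have hcompl : 0 ≤ ∑ i ∈ s, ((1 - r i) * (p i - p' i) + r i * (q' i - q i)) :=
    sum_nonneg fun i hi =>
      add_nonneg (mul_nonneg (sub_nonneg.2 (hr i hi).2) (sub_nonneg.2 (hp i hi)))
        (mul_nonneg (hr i hi).1 (sub_nonneg.2 (hq i hi)))
  have hsplit : ∑ i ∈ s, (p i - q i) - ∑ i ∈ s, (p' i - q' i) =
      (∑ i ∈ s, (r i * p i - (1 - r i) * q i) - ∑ i ∈ s, (r i * p' i - (1 - r i) * q' i)) +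
        ∑ i ∈ s, ((1 - r i) * (p i - p' i) + r i * (q' i - q i)) := by
    rw [← sum_sub_distrib, ← sum_sub_distrib, ← sum_add_distrib]
    exact sum_congr rfl fun i _ => by ring
  linarith

theorem stmt_13_general {N : Type*} [Fintype N] [DecidableEq N]
    (F' : (N → ℝ) → ((N → ℝ) →L[ℝ] ℝ))
    (hanti : ∀ x ∈ Set.Icc (0 : N → ℝ) 1, ∀ y ∈ Set.Icc (0 : N → ℝ) 1, x ≤ y →
      ∀ u : N, F' y (Pi.single u 1) ≤ F' x (Pi.single u 1))
    (x x' y y' : N → ℝ)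
    (hx : x ∈ Set.Icc (0 : N → ℝ) 1) (hx' : x' ∈ Set.Icc (0 : N → ℝ) 1)
    (hy : y ∈ Set.Icc (0 : N → ℝ) 1) (hy' : y' ∈ Set.Icc (0 : N → ℝ) 1)
    (hxx' : x ≤ x') (hy'y : y' ≤ y)
    (r : N → ℝ) (hr : ∀ u, r u ∈ Set.Icc (0 : ℝ) 1) (γ : ℝ)
    (h : ∑ u : N, (r u * F' x' (Pi.single u 1) - (1 - r u) * F' y' (Pi.single u 1)) ≤
        ∑ u : N, (r u * F' x (Pi.single u 1) - (1 - r u) * F' y (Pi.single u 1)) - γ) :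
    ∑ u : N, (F' x' (Pi.single u 1) - F' y' (Pi.single u 1)) ≤
      ∑ u : N, (F' x (Pi.single u 1) - F' y (Pi.single u 1)) - γ :=
  univ.sum_sub_le_sum_sub_of_weighted (fun u _ => hanti x hx x' hx' hxx' u)
    (fun u _ => hanti y' hy' y hy hy'y u) (fun u _ => hr u) h

theorem stmt_13 {N : Type*} [Fintype N] [DecidableEq N]
    (F : (N → ℝ) → ℝ) (F' : (N → ℝ) → ((N → ℝ) →L[ℝ] ℝ))
    (hdiff : ∀ x ∈ Set.Icc (0 : N → ℝ) 1, HasFDerivWithinAt F (F' x) (Set.Icc 0 1) x)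
    (hanti : ∀ x ∈ Set.Icc (0 : N → ℝ) 1, ∀ y ∈ Set.Icc (0 : N → ℝ) 1, x ≤ y →
      ∀ u : N, F' y (Pi.single u 1) ≤ F' x (Pi.single u 1))
    (x x' y y' : N → ℝ)
    (hx : x ∈ Set.Icc (0 : N → ℝ) 1) (hx' : x' ∈ Set.Icc (0 : N → ℝ) 1)
    (hy : y ∈ Set.Icc (0 : N → ℝ) 1) (hy' : y' ∈ Set.Icc (0 : N → ℝ) 1)
    (hxx' : x ≤ x') (hy'y : y' ≤ y)
    (r : N → ℝ) (hr : ∀ u, r u ∈ Set.Icc (0 : ℝ) 1) (γ : ℝ)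
    (h : ∑ u : N, (r u * F' x' (Pi.single u 1) - (1 - r u) * F' y' (Pi.single u 1)) ≤
        ∑ u : N, (r u * F' x (Pi.single u 1) - (1 - r u) * F' y (Pi.single u 1)) - γ) :
    ∑ u : N, (F' x' (Pi.single u 1) - F' y' (Pi.single u 1)) ≤
      ∑ u : N, (F' x (Pi.single u 1) - F' y (Pi.single u 1)) - γ :=
  stmt_13_general F' hanti x x' y y' hx hx' hy hy' hxx' hy'y r hr γ h
end

section
/- Let N be a finite set and let F: ℝ^N → ℝ be differentiable on the box [0,1]^N with an antitone gradient on the box (i.e., ∇F(x) ≥ ∇F(y) coordinatewise whenever x ≤ y coordinatewise, x, y ∈ [0,1]^N). Let z* ∈ [0,1]^N, let Δ ∈ [0,1], and let x, y ∈ [0,1]^N satisfy y = x + Δ·1_N. For each u ∈ N set a_u := ∂_u F(x) and b_u := −∂_u F(y), and let r_u := a_u/(a_u+b_u) if a_u > 0 and b_u > 0, r_u := 1 if a_u > 0 and b_u ≤ 0, and r_u := 0 if a_u ≤ 0. Then for every δ ∈ [0, Δ], setting x' := x + δ·r and y' := y − δ·(1_N − r), it holds that F((z* ∨ x) ∧ y)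 − F((z* ∨ x') ∧ y') ≤ δ · Σ_{u : a_u > 0 and b_u > 0} max(b_u·r_u, a_u·(1 − r_u)). -/
/-!
Let `q` and `q'` be the two clamped points and `m = q ⊓ q'`; all three lie in `[x, y]`. The mean
value theorem along segments together with the antitone gradient gives
`F q - F m ≤ ∇F(x) ⬝ (q - m)` and `F m - F q' ≤ -∇F(y) ⬝ (q' - m)`. Coordinatewise, raising the lower
clamp bound by `δ r` and lowering the upper one by `δ (1 - r)` moves the clamped value up by at
most `δ r` and down by at most `δ (1 - r)`, and only one of `q - m`, `q' - m` is nonzero in each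
coordinate. The choice of `r` makes the resulting bound vanish unless `a_u > 0` and `b_u > 0`.
-/

open Finset

lemma sup_add_inf_sub_le {α : Type*} [Lattice α] [AddCommGroup α] [AddLeftMono α]
    {c d : α} (hc : 0 ≤ c) (hd : 0 ≤ d) (z x y : α) :
    (z ⊔ (x + c)) ⊓ (y - d) ≤ (z ⊔ x) ⊓ y + c := by
  rw [inf_add, sup_add]
  exact inf_le_inf (sup_le_sup_right (le_add_of_nonneg_right hc) _)
    ((sub_le_self y hd).trans (le_add_of_nonneg_right hc))

lemma sup_inf_le_sup_add_inf_sub_add {α : Type*} [Lattice α] [AddCommGroup α] [AddLeftMono α]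
    {c d : α} (hc : 0 ≤ c) (hd : 0 ≤ d) (z x y : α) :
    (z ⊔ x) ⊓ y ≤ (z ⊔ (x + c)) ⊓ (y - d) + d := by
  rw [inf_add, sub_add_cancel]
  exact inf_le_inf_right _
    (le_add_of_le_of_nonneg (sup_le_sup_left (le_add_of_nonneg_right hc) _) hd)

lemma sub_inf_mul_add_sub_inf_mul_le {q q' c d : ℝ} (h₁ : q' ≤ q + c) (h₂ : q ≤ q' + d)
    (a b : ℝ) : (q - q ⊓ q') * a + (q' - q ⊓ q') * b ≤ max (c * b⁺) (d * a⁺) := by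
  rcases le_total q q' with h | h
  · rw [inf_eq_left.2 h, sub_self, zero_mul, zero_add]
    refine le_max_of_le_left ?_
    nlinarith [le_posPart b, posPart_nonneg b]
  · rw [inf_eq_right.2 h, sub_self, zero_mul, add_zero]
    refine le_max_of_le_right ?_
    nlinarith [le_posPart a, posPart_nonneg a]

noncomputable def splitRatio (a b : ℝ) : ℝ :=
  if 0 < a ∧ 0 < b then a / (a + b) else if 0 < a then 1 else 0

lemma splitRatio_mem_Icc (a b : ℝ) : splitRatio a b ∈ Set.Icc 0 1 := by
  unfold splitRatio
  split_ifs with hab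
  · exact ⟨div_nonneg hab.1.le (by linarith [hab.2]),
      div_le_one_of_le₀ (le_add_of_nonneg_right hab.2.le) (by linarith [hab.1, hab.2])⟩
  all_goals simp

lemma max_splitRatio_mul_posPart (a b : ℝ) :
    max (splitRatio a b * b⁺) ((1 - splitRatio a b) * a⁺) =
      if 0 < a ∧ 0 < b then max (b * splitRatio a b) (a * (1 - splitRatio a b)) else 0 := by
  by_cases hab : 0 < a ∧ 0 < b
  · rw [if_pos hab, posPart_eq_self.2 hab.1.le, posPart_eq_self.2 hab.2.le, mul_comm b,
      mul_comm a]
  · rw [if_neg hab]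
    by_cases ha : 0 < a
    · have hb : b⁺ = 0 := posPart_eq_zero.2 (not_lt.1 fun hb => hab ⟨ha, hb⟩)
      simp [splitRatio, ha, hb, not_lt.2 (posPart_eq_zero.1 hb)]
    · simp [splitRatio, ha, posPart_eq_zero.2 (not_lt.1 ha)]

namespace ContinuousLinearMap

variable {N : Type*} [Fintype N] [DecidableEq N]

lemma apply_eq_sum_mul_single (L : (N → ℝ) →L[ℝ] ℝ) (h : N → ℝ) :
    L h = ∑ u, h u * L (Pi.single u 1) := by
  conv_lhs => rw [← Finset.univ_sum_single h, map_sum]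
  refine sum_congr rfl fun u _ => ?_
  rw [← smul_eq_mul, ← map_smul, ← Pi.single_smul', smul_eq_mul, mul_one]

lemma apply_le_apply_of_single_le {L M : (N → ℝ) →L[ℝ] ℝ}
    (hLM : ∀ u, L (Pi.single u 1) ≤ M (Pi.single u 1)) {h : N → ℝ} (hh : 0 ≤ h) :
    L h ≤ M h := by
  rw [apply_eq_sum_mul_single L, apply_eq_sum_mul_single M]
  exact sum_le_sum fun u _ => mul_le_mul_of_nonneg_left (hLM u) (hh u)

end ContinuousLinearMap

lemma exists_mem_Icc_sub_eq_fderiv_apply {E : Type*} [NormedAddCommGroup E] [NormedSpace ℝ E]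
    [PartialOrder E] [IsOrderedAddMonoid E] [PosSMulMono ℝ E]
    {f : E → ℝ} {f' : E → StrongDual ℝ E} {s : Set E}
    (hs : Convex ℝ s) (hf : ∀ x ∈ s, HasFDerivWithinAt f (f' x) s x)
    {v w : E} (hv : v ∈ s) (hw : w ∈ s) (hvw : v ≤ w) :
    ∃ z ∈ s ∩ Set.Icc v w, f w - f v = f' z (w - v) := by
  obtain ⟨z, hz, h⟩ := domain_mvt hf hs hv hw
  exact ⟨z, ⟨hs.segment_subset hv hw hz, segment_subset_Icc hvw hz⟩, h⟩

section AntitoneGradient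

variable {N : Type*} [Fintype N] [DecidableEq N]
  {F : (N → ℝ) → ℝ} {F' : (N → ℝ) → ((N → ℝ) →L[ℝ] ℝ)} {s : Set (N → ℝ)}

lemma sub_le_fderiv_apply_of_le (hs : Convex ℝ s)
    (hdiff : ∀ x ∈ s, HasFDerivWithinAt F (F' x) s x)
    (hanti : ∀ x ∈ s, ∀ y ∈ s, x ≤ y → ∀ u : N, F' y (Pi.single u 1) ≤ F' x (Pi.single u 1))
    {x v w : N → ℝ} (hx : x ∈ s) (hv : v ∈ s) (hw : w ∈ s) (hxv : x ≤ v) (hvw : v ≤ w) :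
    F w - F v ≤ F' x (w - v) := by
  obtain ⟨z, ⟨hzs, hvz, -⟩, h⟩ := exists_mem_Icc_sub_eq_fderiv_apply hs hdiff hv hw hvw
  rw [h]
  exact ContinuousLinearMap.apply_le_apply_of_single_le (hanti x hx z hzs (hxv.trans hvz))
    (sub_nonneg.2 hvw)

lemma fderiv_apply_le_sub_of_le (hs : Convex ℝ s)
    (hdiff : ∀ x ∈ s, HasFDerivWithinAt F (F' x) s x)
    (hanti : ∀ x ∈ s, ∀ y ∈ s, x ≤ y → ∀ u : N, F' y (Pi.single u 1) ≤ F' x (Pi.single u 1))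
    {y v w : N → ℝ} (hy : y ∈ s) (hv : v ∈ s) (hw : w ∈ s) (hvw : v ≤ w) (hwy : w ≤ y) :
    F' y (w - v) ≤ F w - F v := by
  obtain ⟨z, ⟨hzs, -, hzw⟩, h⟩ := exists_mem_Icc_sub_eq_fderiv_apply hs hdiff hv hw hvw
  rw [h]
  exact ContinuousLinearMap.apply_le_apply_of_single_le (hanti z hzs y hy (hzw.trans hwy))
    (sub_nonneg.2 hvw)

lemma sub_le_sum_of_mem_Icc (hs : Convex ℝ s)
    (hdiff : ∀ x ∈ s, HasFDerivWithinAt F (F' x) s x)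
    (hanti : ∀ x ∈ s, ∀ y ∈ s, x ≤ y → ∀ u : N, F' y (Pi.single u 1) ≤ F' x (Pi.single u 1))
    {x y p q : N → ℝ} (hxy : Set.Icc x y ⊆ s) (hp : p ∈ Set.Icc x y) (hq : q ∈ Set.Icc x y) :
    F p - F q ≤ ∑ u, ((p - p ⊓ q) u * F' x (Pi.single u 1)
      + (q - p ⊓ q) u * -F' y (Pi.single u 1)) := by
  have hx : x ∈ s := hxy ⟨le_rfl, hp.1.trans hp.2⟩
  have hy : y ∈ s := hxy ⟨hp.1.trans hp.2, le_rfl⟩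
  have hm : p ⊓ q ∈ Set.Icc x y := ⟨le_inf hp.1 hq.1, inf_le_left.trans hp.2⟩
  have hpm := sub_le_fderiv_apply_of_le hs hdiff hanti hx (hxy hm) (hxy hp) hm.1 inf_le_left
  have hmq := fderiv_apply_le_sub_of_le hs hdiff hanti hy (hxy hm) (hxy hq) inf_le_right hq.2
  rw [ContinuousLinearMap.apply_eq_sum_mul_single] at hpm hmq
  simp only [mul_neg, sum_add_distrib, sum_neg_distrib]
  linarith

end AntitoneGradient
theorem stmt_15_general {N : Type*} [Fintype N] [DecidableEq N]
    (F : (N → ℝ) → ℝ) (F' : (N → ℝ) → ((N → ℝ) →L[ℝ] ℝ))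
    (hdiff : ∀ x ∈ Set.Icc (0 : N → ℝ) 1, HasFDerivWithinAt F (F' x) (Set.Icc 0 1) x)
    (hanti : ∀ x ∈ Set.Icc (0 : N → ℝ) 1, ∀ y ∈ Set.Icc (0 : N → ℝ) 1, x ≤ y →
      ∀ u : N, F' y (Pi.single u 1) ≤ F' x (Pi.single u 1))
    (zstar : N → ℝ)
    (Δ : ℝ)
    (x y : N → ℝ) (hx : x ∈ Set.Icc (0 : N → ℝ) 1) (hy : y ∈ Set.Icc (0 : N → ℝ) 1)
    (hxy : ∀ u, y u = x u + Δ)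
    (a b r : N → ℝ)
    (ha : ∀ u, a u = F' x (Pi.single u 1))
    (hb : ∀ u, b u = -(F' y (Pi.single u 1)))
    (hr : ∀ u, r u = if 0 < a u ∧ 0 < b u then a u / (a u + b u)
      else if 0 < a u then 1 else 0)
    (δ : ℝ) (hδ : δ ∈ Set.Icc 0 Δ) :
    F ((zstar ⊔ x) ⊓ y) - F ((zstar ⊔ (x + δ • r)) ⊓ (y - δ • (1 - r))) ≤
      δ * ∑ u ∈ univ.filter (fun u => 0 < a u ∧ 0 < b u),
        max (b u * r u) (a u * (1 - r u)) := by
  have hsplit : ∀ u, r u = splitRatio (a u) (b u) := hr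
  have hr01 : ∀ u, r u ∈ Set.Icc 0 1 := fun u => hsplit u ▸ splitRatio_mem_Icc _ _
  have hup : 0 ≤ δ • r := smul_nonneg hδ.1 fun u => (hr01 u).1
  have hdown : 0 ≤ δ • (1 - r) := smul_nonneg hδ.1 fun u => sub_nonneg.2 (hr01 u).2
  have hxy' : x ≤ y - δ • (1 - r) := fun u => by
    simp only [Pi.sub_apply, Pi.smul_apply, smul_eq_mul, Pi.one_apply, hxy u]
    nlinarith [mul_nonneg hδ.1 (hr01 u).1, hδ.2]
  have hq : (zstar ⊔ x) ⊓ y ∈ Set.Icc x y :=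
    ⟨le_inf le_sup_right (hxy'.trans (sub_le_self y hdown)), inf_le_right⟩
  have hq' : (zstar ⊔ (x + δ • r)) ⊓ (y - δ • (1 - r)) ∈ Set.Icc x y :=
    ⟨le_inf ((le_add_of_nonneg_right hup).trans le_sup_right) hxy',
      inf_le_right.trans (sub_le_self y hdown)⟩
  refine (sub_le_sum_of_mem_Icc (convex_Icc 0 1) hdiff hanti
    (Set.Icc_subset_Icc hx.1 hy.2) hq hq').trans ?_
  calc _ ≤ ∑ u, δ * max (r u * (b u)⁺) ((1 - r u) * (a u)⁺) := sum_le_sum fun u _ => by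
        rw [← ha, ← hb, mul_max_of_nonneg _ _ hδ.1, ← mul_assoc, ← mul_assoc]
        exact sub_inf_mul_add_sub_inf_mul_le (sup_add_inf_sub_le hup hdown zstar x y u)
          (sup_inf_le_sup_add_inf_sub_add hup hdown zstar x y u) _ _
    _ = _ := by
        simp only [hsplit, max_splitRatio_mul_posPart, mul_sum, sum_filter, mul_ite, mul_zero]

theorem stmt_15 {N : Type*} [Fintype N] [DecidableEq N]
    (F : (N → ℝ) → ℝ) (F' : (N → ℝ) → ((N → ℝ) →L[ℝ] ℝ))
    (hdiff : ∀ x ∈ Set.Icc (0 : N → ℝ) 1, HasFDerivWithinAt F (F' x) (Set.Icc 0 1) x)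
    (hanti : ∀ x ∈ Set.Icc (0 : N → ℝ) 1, ∀ y ∈ Set.Icc (0 : N → ℝ) 1, x ≤ y →
      ∀ u : N, F' y (Pi.single u 1) ≤ F' x (Pi.single u 1))
    (zstar : N → ℝ) (hzstar : zstar ∈ Set.Icc (0 : N → ℝ) 1)
    (Δ : ℝ) (hΔ : Δ ∈ Set.Icc (0 : ℝ) 1)
    (x y : N → ℝ) (hx : x ∈ Set.Icc (0 : N → ℝ) 1) (hy : y ∈ Set.Icc (0 : N → ℝ) 1)
    (hxy : ∀ u, y u = x u + Δ)
    (a b r : N → ℝ)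
    (ha : ∀ u, a u = F' x (Pi.single u 1))
    (hb : ∀ u, b u = -(F' y (Pi.single u 1)))
    (hr : ∀ u, r u = if 0 < a u ∧ 0 < b u then a u / (a u + b u)
      else if 0 < a u then 1 else 0)
    (δ : ℝ) (hδ : δ ∈ Set.Icc 0 Δ) :
    F ((zstar ⊔ x) ⊓ y) - F ((zstar ⊔ (x + δ • r)) ⊓ (y - δ • (1 - r))) ≤
      δ * ∑ u ∈ univ.filter (fun u => 0 < a u ∧ 0 < b u),
        max (b u * r u) (a u * (1 - r u)) :=
  stmt_15_general F F' hdiff hanti zstar Δ x y hx hy hxy a b r ha hb hr δ hδ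
end
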